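/- Let E ⊂ ℝ be a finite set. There exist universal constants C and D and a linear operator Ē± : C²(E) → C²(ℝ) such that: (i) Ē±(f)|_E = f for all f ∈ C²(E); (ii) ‖Ē±(f)‖_{C²(ℝ)} ≤ C‖f‖_{C²(E)}; (iii) for each t ∈ ℝ there exists S(t) ⊂ E with #S(t) ≤ D such that for all f, g ∈ C²(E) with f = g on S(t), the m-th derivatives satisfy (d^m/dt^m)(Ē±(f))(t) = (d^m/dt^m)(Ē±(g))(t) for m = 0, 1, 2. -/

import Mathlib

open Set Real

noncomputable section

/-- `(Σ_{m ≤ 2} |F^{(m)}(t)|²)^{1/2}`. -/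
noncomputable def C2sum1 (F : ℝ → ℝ) (t : ℝ) : ℝ :=
  Real.sqrt (∑ m ∈ Finset.range 3, (iteratedDeriv m F t) ^ 2)

/-- `‖F‖_{C²(ℝ)} ≤ M`. -/
def C2NormLE1 (F : ℝ → ℝ) (M : ℝ) : Prop := ∀ t, C2sum1 F t ≤ M

/-- The trace norm `‖f‖_{C²(E)}` for `E ⊂ ℝ` (no nonnegativity constraint).  Note that for a
finite set `E`, every function on `E` is the restriction of a `C²` function, so `C²(E)` is
the whole function space `ℝ^E`. -/
noncomputable def traceNorm1 (E : Set ℝ) (f : ℝ → ℝ) : ℝ :=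
  sInf { M | ∃ F : ℝ → ℝ, ContDiff ℝ 2 F ∧ (∀ t ∈ E, F t = f t) ∧ C2NormLE1 F M }

/-!
Sort `E` as `x₀ < ⋯ < x_{n-1}`. At each node take the jet `f(x_j) + s_j (t - x_j)`, where `s_j`
is the divided difference of `f` with the nearest neighbouring node, with `t - x_j` replaced by a
compactly supported function that is the identity on `[-1, 1]`; consecutive jets are glued by a
smooth step rising on the middle half of the gap between them. Near any `t` the result is one jet
or a blend of two consecutive ones, so it depends on at most four nodes.

If `F` is any `C²` extension of `f` with norm `≤ M`, the mean value theorem makes every `s_j` a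
value of `F'` near `x_j`, so values and slopes are `≤ M`. On a gap of width `w < 1` the two jets
are affine, differ by `O(M w²)` and their slopes by `O(M w)`, which exactly compensates the
factors `w⁻ᵏ` in the derivatives of the step; on wider gaps all terms are `O(M)` directly.
-/

namespace C2Extension

open Filter Topology Finset

lemma exists_abs_iteratedDeriv_le_of_hasCompactSupport_deriv {g : ℝ → ℝ} (hg : ContDiff ℝ 2 g)
    (hb : ∃ B, ∀ s, |g s| ≤ B) (hc : HasCompactSupport (deriv g)) :
    ∃ K, ∀ k ≤ 2, ∀ s, |iteratedDeriv k g s| ≤ K := by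
  obtain ⟨B₀, hB₀⟩ := hb
  obtain ⟨B₁, hB₁⟩ := (hg.continuous_deriv one_le_two).bounded_above_of_compact_support hc
  obtain ⟨B₂, hB₂⟩ := (hg.continuous_iteratedDeriv 2 le_rfl).bounded_above_of_compact_support
    (by rw [iteratedDeriv_succ, iteratedDeriv_one]; exact hc.deriv)
  refine ⟨max B₀ (max B₁ B₂), fun k hk s => ?_⟩
  interval_cases k
  · rw [iteratedDeriv_zero]; exact (hB₀ s).trans (le_max_left _ _)
  · rw [iteratedDeriv_one, ← Real.norm_eq_abs]
    exact (hB₁ s).trans ((le_max_left _ _).trans (le_max_right _ _))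
  · rw [← Real.norm_eq_abs]; exact (hB₂ s).trans ((le_max_right _ _).trans (le_max_right _ _))

lemma exists_abs_iteratedDeriv_le_of_hasCompactSupport {g : ℝ → ℝ} (hg : ContDiff ℝ 2 g)
    (hc : HasCompactSupport g) : ∃ K, ∀ k ≤ 2, ∀ s, |iteratedDeriv k g s| ≤ K :=
  exists_abs_iteratedDeriv_le_of_hasCompactSupport_deriv hg
    (by simpa using hg.continuous.bounded_above_of_compact_support hc) hc.deriv

lemma abs_iteratedDeriv_mul_le {u v : ℝ → ℝ} {t P : ℝ} {m : ℕ} (hu : ContDiffAt ℝ m u t)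
    (hv : ContDiffAt ℝ m v t)
    (h : ∀ k ≤ m, |iteratedDeriv k u t| * |iteratedDeriv (m - k) v t| ≤ P) :
    |iteratedDeriv m (u * v) t| ≤ 2 ^ m * P := by
  rw [iteratedDeriv_mul hu hv]
  calc _ ≤ ∑ k ∈ range (m + 1),
          |(m.choose k : ℝ) * iteratedDeriv k u t * iteratedDeriv (m - k) v t| :=
        abs_sum_le_sum_abs _ _
    _ ≤ ∑ k ∈ range (m + 1), (m.choose k : ℝ) * P := by
        gcongr with k hk
        rw [abs_mul, abs_mul, Nat.abs_cast, mul_assoc]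
        exact mul_le_mul_of_nonneg_left (h k (Nat.lt_succ_iff.1 (mem_range.1 hk)))
          (Nat.cast_nonneg _)
    _ = 2 ^ m * P := by rw [← sum_mul]; congr 1; exact_mod_cast Nat.sum_range_choose m

lemma abs_iteratedDeriv_mul_le_of_scale {u v : ℝ → ℝ} {t r A B : ℝ} (hu : ContDiff ℝ 2 u)
    (hv : ContDiff ℝ 2 v) (hr : 0 < r) (hr₁ : r ≤ 1)
    (hA : ∀ k ≤ 2, |iteratedDeriv k u t| ≤ A * r ^ (2 - k))
    (hB : ∀ k ≤ 2, |iteratedDeriv k v t| * r ^ k ≤ B) {m : ℕ} (hm : m ≤ 2) :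
    |iteratedDeriv m (u * v) t| ≤ 4 * (A * B) := by
  have hA₀ : 0 ≤ A := nonneg_of_mul_nonneg_left ((abs_nonneg _).trans (hA 0 zero_le_two))
    (by positivity)
  have hB₀ : 0 ≤ B := (mul_nonneg (abs_nonneg _) (by positivity)).trans (hB 0 zero_le_two)
  have hterm : ∀ k ≤ m, |iteratedDeriv k u t| * |iteratedDeriv (m - k) v t| ≤ A * B := by
    intro k hk
    refine le_of_mul_le_mul_left ?_ (pow_pos hr (m - k))
    calc r ^ (m - k) * (|iteratedDeriv k u t| * |iteratedDeriv (m - k) v t|)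
        = |iteratedDeriv k u t| * (|iteratedDeriv (m - k) v t| * r ^ (m - k)) := by ring
      _ ≤ A * r ^ (2 - k) * B :=
        mul_le_mul (hA k (by omega)) (hB _ (by omega)) (by positivity) (by positivity)
      _ = r ^ (m - k) * (A * B) * r ^ (2 - m) := by
        rw [show 2 - k = (m - k) + (2 - m) by omega, pow_add]; ring
      _ ≤ r ^ (m - k) * (A * B) := mul_le_of_le_one_right (by positivity) (pow_le_one₀ hr.le hr₁)
  calc |iteratedDeriv m (u * v) t| ≤ 2 ^ m * (A * B) :=
        abs_iteratedDeriv_mul_le (hu.contDiffAt.of_le (by exact_mod_cast hm))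
          (hv.contDiffAt.of_le (by exact_mod_cast hm)) hterm
    _ ≤ 4 * (A * B) := by
        gcongr
        calc (2 : ℝ) ^ m ≤ 2 ^ 2 := pow_le_pow_right₀ one_le_two hm
          _ = 4 := by norm_num

section C2Norm

variable {F : ℝ → ℝ} {M : ℝ}

lemma abs_iteratedDeriv_le_of_c2NormLE1 (h : C2NormLE1 F M) {m : ℕ} (hm : m ≤ 2) (t : ℝ) :
    |iteratedDeriv m F t| ≤ M := by
  rw [← Real.sqrt_sq_eq_abs]
  exact (Real.sqrt_le_sqrt (single_le_sum (f := fun k => iteratedDeriv k F t ^ 2)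
    (fun k _ => sq_nonneg _) (mem_range.2 (by omega)))).trans (h t)

lemma abs_le_of_c2NormLE1 (h : C2NormLE1 F M) (t : ℝ) : |F t| ≤ M := by
  simpa using abs_iteratedDeriv_le_of_c2NormLE1 h zero_le_two t

lemma abs_deriv_le_of_c2NormLE1 (h : C2NormLE1 F M) (t : ℝ) : |deriv F t| ≤ M := by
  simpa using abs_iteratedDeriv_le_of_c2NormLE1 h one_le_two t

lemma abs_deriv_deriv_le_of_c2NormLE1 (h : C2NormLE1 F M) (t : ℝ) : |deriv (deriv F) t| ≤ M := by
  simpa [iteratedDeriv_succ] using abs_iteratedDeriv_le_of_c2NormLE1 h le_rfl t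

lemma c2NormLE1_two_mul_of_abs_le {B : ℝ} (h : ∀ m ≤ 2, ∀ t, |iteratedDeriv m F t| ≤ B) :
    C2NormLE1 F (2 * B) := by
  intro t
  have hB : 0 ≤ B := (abs_nonneg _).trans (h 0 zero_le_two t)
  have hsq : ∀ m ≤ 2, iteratedDeriv m F t ^ 2 ≤ B ^ 2 := fun m hm => by
    rw [← sq_abs]; exact pow_le_pow_left₀ (abs_nonneg _) (h m hm t) 2
  rw [C2sum1, Real.sqrt_le_left (by positivity)]
  simp only [sum_range_succ, sum_range_zero, zero_add]
  nlinarith [hsq 0 zero_le_two, hsq 1 one_le_two, hsq 2 le_rfl]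

end C2Norm

def unitBump : ContDiffBump (0 : ℝ) := ⟨1, 2, one_pos, one_lt_two⟩

def truncId (s : ℝ) : ℝ := s * unitBump s

lemma contDiff_truncId : ContDiff ℝ 2 truncId := contDiff_id.mul unitBump.contDiff

lemma hasCompactSupport_truncId : HasCompactSupport truncId :=
  unitBump.hasCompactSupport.mul_left

lemma truncId_eventuallyEq_id {s : ℝ} (hs : |s| < 1) : truncId =ᶠ[𝓝 s] id := by
  have hball : s ∈ Metric.ball (0 : ℝ) unitBump.rIn := by simpa [unitBump] using hs
  filter_upwards [unitBump.eventuallyEq_one_of_mem_ball hball] with y hy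
  simp [truncId, hy]

lemma hasCompactSupport_deriv_smoothTransition : HasCompactSupport (deriv smoothTransition) := by
  refine HasCompactSupport.intro (isCompact_Icc (a := 0) (b := 1)) fun s hs => ?_
  rcases not_and_or.1 hs with h | h
  · have : smoothTransition =ᶠ[𝓝 s] fun _ => 0 := by
      filter_upwards [Iio_mem_nhds (not_le.1 h)] with y hy
      exact smoothTransition.zero_of_nonpos hy.le
    rw [this.deriv_eq, deriv_const]
  · have : smoothTransition =ᶠ[𝓝 s] fun _ => 1 := by
      filter_upwards [Ioi_mem_nhds (not_le.1 h)] with y hy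
      exact smoothTransition.one_of_one_le hy.le
    rw [this.deriv_eq, deriv_const]

def ProfileBound (K : ℝ) : Prop :=
  ∀ k ≤ 2, ∀ s, |iteratedDeriv k truncId s| ≤ K ∧ |iteratedDeriv k smoothTransition s| ≤ K

lemma ProfileBound.nonneg {K : ℝ} (hK : ProfileBound K) : 0 ≤ K :=
  (abs_nonneg _).trans (hK 0 zero_le_two 0).1

lemma exists_profileBound : ∃ K, ProfileBound K := by
  obtain ⟨K₁, h₁⟩ :=
    exists_abs_iteratedDeriv_le_of_hasCompactSupport contDiff_truncId hasCompactSupport_truncId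
  obtain ⟨K₂, h₂⟩ := exists_abs_iteratedDeriv_le_of_hasCompactSupport_deriv
    (smoothTransition.contDiff (n := 2)) ⟨1, fun s => by
      rw [abs_of_nonneg (smoothTransition.nonneg s)]; exact smoothTransition.le_one s⟩
    hasCompactSupport_deriv_smoothTransition
  exact ⟨max K₁ K₂, fun k hk s =>
    ⟨(h₁ k hk s).trans (le_max_left _ _), (h₂ k hk s).trans (le_max_right _ _)⟩⟩

lemma sum_range_sub_mul_eq {a c : ℕ → ℝ} {N i : ℕ} (hi : i < N) (h₁ : ∀ j < i, c j = 1)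
    (h₀ : ∀ j, i < j → j < N → c j = 0) :
    ∑ j ∈ range N, (a (j + 1) - a j) * c j = a i - a 0 + (a (i + 1) - a i) * c i := by
  have hlow : ∑ j ∈ range i, (a (j + 1) - a j) * c j = a i - a 0 := by
    rw [← sum_range_sub]
    exact sum_congr rfl fun j hj => by rw [h₁ j (mem_range.1 hj), mul_one]
  have hhigh : ∑ j ∈ Ico (i + 1) N, (a (j + 1) - a j) * c j = 0 :=
    sum_eq_zero fun j hj => by rw [h₀ j (mem_Ico.1 hj).1 (mem_Ico.1 hj).2, mul_zero]
  rw [← sum_range_add_sum_Ico _ hi, sum_range_succ, hlow, hhigh, add_zero]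

section Construction

variable (n : ℕ) (x : ℕ → ℝ)

/-- For a single node this is the node itself, so that the slope `slope f (x 0) (x 0)` is `0`. -/
def nearestNbr (j : ℕ) : ℝ :=
  if n ≤ 1 then x j
  else if j = 0 then x 1
  else if n ≤ j + 1 then x (j - 1)
  else if x (j + 1) - x j ≤ x j - x (j - 1) then x (j + 1) else x (j - 1)

def jet (f : ℝ → ℝ) (j : ℕ) (t : ℝ) : ℝ :=
  f (x j) + slope f (x j) (nearestNbr n x j) * truncId (t - x j)

/-- Rises from `0` to `1` on the middle half of `[x i, x (i + 1)]`. -/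
def transition (i : ℕ) (t : ℝ) : ℝ :=
  smoothTransition (2 / (x (i + 1) - x i) * (t - (3 * x i + x (i + 1)) / 4))

def window (f : ℝ → ℝ) (i : ℕ) : ℝ → ℝ :=
  jet n x f i + (jet n x f (i + 1) - jet n x f i) * transition x i

def extend (f : ℝ → ℝ) (t : ℝ) : ℝ :=
  jet n x f 0 t + ∑ i ∈ range (n - 1), (jet n x f (i + 1) t - jet n x f i t) * transition x i t

end Construction

variable {n : ℕ} {x : ℕ → ℝ} {f g F : ℝ → ℝ} {i j k : ℕ} {t M K : ℝ}

section Nodes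

lemma exists_nearestNbr_eq (hj : j < n) : ∃ k < n, nearestNbr n x j = x k := by
  unfold nearestNbr
  split_ifs <;> exact ⟨_, by omega, rfl⟩

lemma nearestNbr_ne (hx : StrictMono x) (hn : 2 ≤ n) (hj : j < n) : nearestNbr n x j ≠ x j := by
  unfold nearestNbr
  split_ifs <;> first | omega | exact hx.injective.ne (by omega)

lemma abs_nearestNbr_sub_le_right (hx : StrictMono x) (hj : j + 1 < n) :
    |nearestNbr n x j - x j| ≤ x (j + 1) - x j := by
  have hlt : x j < x (j + 1) := hx j.lt_succ_self
  unfold nearestNbr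
  split_ifs with h₁ h₂ h₃ h₄
  · omega
  · subst h₂; rw [abs_of_pos (sub_pos.2 hlt)]
  · omega
  · rw [abs_of_pos (sub_pos.2 hlt)]
  · have : x (j - 1) < x j := hx (by omega)
    rw [abs_of_neg (by linarith)]; linarith

lemma abs_nearestNbr_sub_le_left (hx : StrictMono x) (hj₀ : 0 < j) (hj : j < n) :
    |nearestNbr n x j - x j| ≤ x j - x (j - 1) := by
  have hlt : x (j - 1) < x j := hx (by omega)
  unfold nearestNbr
  split_ifs with h₁ h₂ h₃ h₄
  · omega
  · omega
  · rw [abs_of_neg (by linarith)]; linarith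
  · have : x j < x (j + 1) := hx j.lt_succ_self
    rw [abs_of_pos (by linarith)]; linarith
  · rw [abs_of_neg (by linarith)]; linarith

end Nodes

section Transition

lemma transition_eq_zero (hx : x i < x (i + 1)) (ht : t ≤ (3 * x i + x (i + 1)) / 4) :
    transition x i t = 0 :=
  smoothTransition.zero_of_nonpos
    (mul_nonpos_of_nonneg_of_nonpos (div_pos two_pos (sub_pos.2 hx)).le (by linarith))

lemma transition_eq_one (hx : x i < x (i + 1)) (ht : (x i + 3 * x (i + 1)) / 4 ≤ t) :
    transition x i t = 1 :=
  smoothTransition.one_of_one_le (by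
    rw [div_mul_eq_mul_div, le_div_iff₀ (sub_pos.2 hx)]; linarith)

lemma eventually_transition_eq_zero (hx : x i < x (i + 1)) (ht : t < x i) :
    ∀ᶠ s in 𝓝 t, transition x i s = 0 := by
  filter_upwards [Iio_mem_nhds ht] with s hs
  exact transition_eq_zero hx (by linarith [mem_Iio.1 hs])

lemma eventually_transition_eq_one (hx : x i < x (i + 1)) (ht : x (i + 1) ≤ t) :
    ∀ᶠ s in 𝓝 t, transition x i s = 1 := by
  filter_upwards [Ioi_mem_nhds (show (x i + 3 * x (i + 1)) / 4 < t by linarith)] with s hs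
  exact transition_eq_one hx (mem_Ioi.1 hs).le

end Transition

section Locality

lemma extend_eventuallyEq_jet_zero (hx : StrictMono x) (ht : t < x 0) (f : ℝ → ℝ) :
    extend n x f =ᶠ[𝓝 t] jet n x f 0 := by
  have hθ : ∀ᶠ s in 𝓝 t, ∀ i ∈ range (n - 1), transition x i s = 0 :=
    (eventually_all_finset _).2 fun i _ =>
      eventually_transition_eq_zero (hx i.lt_succ_self) (ht.trans_le (hx.monotone i.zero_le))
  filter_upwards [hθ] with s hs
  rw [extend, sum_eq_zero fun i hi => by rw [hs i hi, mul_zero], add_zero]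

lemma extend_eventuallyEq_jet_last (hx : StrictMono x) (ht : x (n - 1) ≤ t)
    (f : ℝ → ℝ) : extend n x f =ᶠ[𝓝 t] jet n x f (n - 1) := by
  have hθ : ∀ᶠ s in 𝓝 t, ∀ i ∈ range (n - 1), transition x i s = 1 :=
    (eventually_all_finset _).2 fun i hi => eventually_transition_eq_one (hx i.lt_succ_self)
      ((hx.monotone (by have := mem_range.1 hi; omega)).trans ht)
  filter_upwards [hθ] with s hs
  have hsum : ∑ i ∈ range (n - 1), (jet n x f (i + 1) s - jet n x f i s) * transition x i s
      = ∑ i ∈ range (n - 1), (jet n x f (i + 1) s - jet n x f i s) :=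
    sum_congr rfl fun i hi => by rw [hs i hi, mul_one]
  rw [extend, hsum, sum_range_sub (fun i => jet n x f i s)]
  ring

lemma extend_eventuallyEq_window (hx : StrictMono x) (hi : i + 1 < n) (ht₁ : x i ≤ t)
    (ht₂ : t < x (i + 1)) (f : ℝ → ℝ) : extend n x f =ᶠ[𝓝 t] window n x f i := by
  have hθ : ∀ᶠ s in 𝓝 t, ∀ j ∈ range (n - 1),
      (j < i → transition x j s = 1) ∧ (i < j → transition x j s = 0) := by
    refine (eventually_all_finset _).2 fun j _ => ?_
    rcases lt_trichotomy j i with hji | rfl | hij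
    · filter_upwards [eventually_transition_eq_one (hx j.lt_succ_self)
        ((hx.monotone hji).trans ht₁)] with s hs
      exact ⟨fun _ => hs, fun h => absurd h (by omega)⟩
    · exact Eventually.of_forall fun s => ⟨fun h => absurd h (lt_irrefl _),
        fun h => absurd h (lt_irrefl _)⟩
    · filter_upwards [eventually_transition_eq_zero (hx j.lt_succ_self)
        (ht₂.trans_le (hx.monotone hij))] with s hs
      exact ⟨fun h => absurd h (by omega), fun _ => hs⟩
  filter_upwards [hθ] with s hs
  rw [extend, sum_range_sub_mul_eq (a := fun j => jet n x f j s)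
    (c := fun j => transition x j s) (by omega)
    (fun j hj => (hs j (mem_range.2 (by omega))).1 hj)
    (fun j hij hj => (hs j (mem_range.2 hj)).2 hij)]
  simp only [window, Pi.add_apply, Pi.mul_apply, Pi.sub_apply]
  ring

lemma extend_eventuallyEq_jet_or_window (hx : StrictMono x) (hn : 0 < n) (t : ℝ) :
    (∃ k < n, ∀ f, extend n x f =ᶠ[𝓝 t] jet n x f k) ∨
      ∃ i, i + 1 < n ∧ x i ≤ t ∧ t < x (i + 1) ∧ ∀ f, extend n x f =ᶠ[𝓝 t] window n x f i := by
  classical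
  by_cases h₀ : t < x 0
  · exact Or.inl ⟨0, hn, extend_eventuallyEq_jet_zero hx h₀⟩
  by_cases hlast : x (n - 1) ≤ t
  · exact Or.inl ⟨n - 1, by omega, extend_eventuallyEq_jet_last hx hlast⟩
  rw [not_lt] at h₀
  rw [not_le] at hlast
  have hn₂ : n - 2 + 1 = n - 1 := by
    by_contra h
    rw [show n - 1 = 0 by omega] at hlast
    exact hlast.not_ge h₀
  have hex : ∃ i, t < x (i + 1) := ⟨n - 2, by rwa [hn₂]⟩
  set i := Nat.find hex
  have hxi : x i ≤ t := by
    rcases Nat.eq_zero_or_pos i with h | h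
    · rw [h]; exact h₀
    · have := Nat.find_min hex (show i - 1 < i by omega)
      rwa [show i - 1 + 1 = i by omega, not_lt] at this
  have hin : i + 1 < n := by
    have := Nat.find_min' hex (show t < x (n - 2 + 1) by rwa [hn₂])
    omega
  exact Or.inr ⟨i, hin, hxi, Nat.find_spec hex, extend_eventuallyEq_window hx hin hxi
    (Nat.find_spec hex)⟩

end Locality

section Operator

lemma jet_apply_self (f : ℝ → ℝ) (j : ℕ) : jet n x f j (x j) = f (x j) := by
  simp [jet, truncId]

lemma extend_apply_node (hx : StrictMono x) (hj : j < n) (f : ℝ → ℝ) :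
    extend n x f (x j) = f (x j) := by
  rcases (Nat.succ_le_of_lt hj).lt_or_eq with h | h
  · have hlt := hx j.lt_succ_self
    rw [(extend_eventuallyEq_window hx h le_rfl hlt f).eq_of_nhds]
    simp [window, jet_apply_self, transition_eq_zero hlt (by linarith : x j ≤ _)]
  · obtain rfl : j = n - 1 := by omega
    rw [(extend_eventuallyEq_jet_last hx le_rfl f).eq_of_nhds, jet_apply_self]

lemma jet_add (f g : ℝ → ℝ) (j : ℕ) (t : ℝ) :
    jet n x (f + g) j t = jet n x f j t + jet n x g j t := by
  simp only [jet, slope_def_field, Pi.add_apply]; ring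

lemma jet_smul (c : ℝ) (f : ℝ → ℝ) (j : ℕ) (t : ℝ) :
    jet n x (c • f) j t = c * jet n x f j t := by
  simp only [jet, slope_def_field, Pi.smul_apply, smul_eq_mul]; ring

lemma extend_add (f g : ℝ → ℝ) : extend n x (f + g) = extend n x f + extend n x g := by
  ext t
  simp only [extend, jet_add, Pi.add_apply]
  rw [add_add_add_comm, ← sum_add_distrib]
  exact congrArg _ (sum_congr rfl fun i _ => by ring)

lemma extend_smul (c : ℝ) (f : ℝ → ℝ) : extend n x (c • f) = c • extend n x f := by
  ext t
  simp only [extend, jet_smul, Pi.smul_apply, smul_eq_mul, mul_add, mul_sum]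
  exact congrArg _ (sum_congr rfl fun i _ => by ring)

def extendLinearMap (n : ℕ) (x : ℕ → ℝ) : (ℝ → ℝ) →ₗ[ℝ] (ℝ → ℝ) where
  toFun := extend n x
  map_add' := extend_add
  map_smul' := extend_smul

lemma contDiff_jet : ContDiff ℝ 2 (jet n x f j) :=
  contDiff_const.add (contDiff_const.mul (contDiff_truncId.comp (contDiff_id.sub contDiff_const)))

lemma contDiff_transition : ContDiff ℝ 2 (transition x i) :=
  smoothTransition.contDiff.comp (contDiff_const.mul (contDiff_id.sub contDiff_const))

lemma contDiff_extend : ContDiff ℝ 2 (extend n x f) :=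
  contDiff_jet.add (ContDiff.sum fun _ _ =>
    (contDiff_jet.sub contDiff_jet).mul contDiff_transition)

lemma jet_congr (h₁ : f (x j) = g (x j)) (h₂ : f (nearestNbr n x j) = g (nearestNbr n x j)) :
    jet n x f j = jet n x g j := by
  ext t; simp only [jet, slope_def_field, h₁, h₂]

lemma exists_finset_extend_eventuallyEq (hx : StrictMono x) (hn : 0 < n) (t : ℝ) :
    ∃ S : Finset ℝ, S.card ≤ 4 ∧ (∀ s ∈ S, ∃ j < n, x j = s) ∧
      ∀ f g : ℝ → ℝ, (∀ s ∈ S, f s = g s) → extend n x f =ᶠ[𝓝 t] extend n x g := by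
  have hmem : ∀ j < n, ∀ s ∈ ({x j, nearestNbr n x j} : Finset ℝ), ∃ k < n, x k = s := by
    intro j hj s hs
    rcases mem_insert.1 hs with rfl | hs
    · exact ⟨j, hj, rfl⟩
    · obtain ⟨k, hk, hk'⟩ := exists_nearestNbr_eq (x := x) hj
      exact ⟨k, hk, by rw [Finset.mem_singleton.1 hs, hk']⟩
  rcases extend_eventuallyEq_jet_or_window hx hn t with ⟨k, hk, h⟩ | ⟨i, hi, -, -, h⟩
  · refine ⟨{x k, nearestNbr n x k}, card_le_two.trans (by norm_num), hmem k hk,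
      fun f g hfg => (h f).trans ?_⟩
    rw [jet_congr (hfg _ (by simp)) (hfg _ (by simp))]
    exact (h g).symm
  · refine ⟨{x i, nearestNbr n x i, x (i + 1), nearestNbr n x (i + 1)}, card_le_four,
      fun s hs => ?_, fun f g hfg => (h f).trans ?_⟩
    · simp only [Finset.mem_insert, Finset.mem_singleton] at hs
      rcases hs with rfl | rfl | rfl | rfl
      exacts [hmem i (by omega) _ (by simp), hmem i (by omega) _ (by simp),
        hmem (i + 1) hi _ (by simp), hmem (i + 1) hi _ (by simp)]
    · rw [window, jet_congr (hfg _ (by simp)) (hfg _ (by simp)),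
        jet_congr (j := i + 1) (hfg _ (by simp)) (hfg _ (by simp))]
      exact (h g).symm

end Operator

section Derivatives

lemma iteratedDeriv_jet (hk : 0 < k) (t : ℝ) :
    iteratedDeriv k (jet n x f j) t =
      slope f (x j) (nearestNbr n x j) * iteratedDeriv k truncId (t - x j) := by
  change iteratedDeriv k (fun t => f (x j) + _ * truncId (t - x j)) t = _
  rw [iteratedDeriv_const_add hk, iteratedDeriv_const_mul_field, iteratedDeriv_comp_sub_const]

lemma abs_iteratedDeriv_jet_le (hK : ProfileBound K) (hk : k ≤ 2) (t : ℝ) :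
    |iteratedDeriv k (jet n x f j) t| ≤ |f (x j)| + |slope f (x j) (nearestNbr n x j)| * K := by
  rcases Nat.eq_zero_or_pos k with rfl | hk₀
  · have := (hK 0 zero_le_two (t - x j)).1
    rw [iteratedDeriv_zero] at this ⊢
    calc _ ≤ |f (x j)| + |slope f (x j) (nearestNbr n x j) * truncId (t - x j)| := abs_add_le _ _
      _ ≤ _ := by rw [abs_mul]; gcongr
  · rw [iteratedDeriv_jet hk₀, abs_mul]
    exact le_add_of_nonneg_of_le (abs_nonneg _)
      (mul_le_mul_of_nonneg_left (hK k hk _).1 (abs_nonneg _))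

lemma iteratedDeriv_transition (k : ℕ) (t : ℝ) :
    iteratedDeriv k (transition x i) t = (2 / (x (i + 1) - x i)) ^ k * iteratedDeriv k
      smoothTransition (2 / (x (i + 1) - x i) * (t - (3 * x i + x (i + 1)) / 4)) := by
  have h := congrFun (iteratedDeriv_comp_sub_const k
    (fun u => smoothTransition (2 / (x (i + 1) - x i) * u)) ((3 * x i + x (i + 1)) / 4)) t
  rwa [iteratedDeriv_comp_const_mul smoothTransition.contDiff] at h

lemma abs_iteratedDeriv_transition_mul_pow_le (hK : ProfileBound K) (hx : x i < x (i + 1))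
    {r : ℝ} (hr₀ : 0 ≤ r) (hr : r ≤ x (i + 1) - x i) (hk : k ≤ 2) (t : ℝ) :
    |iteratedDeriv k (transition x i) t| * r ^ k ≤ 4 * K := by
  have hw : 0 < x (i + 1) - x i := sub_pos.2 hx
  have hq : 2 / (x (i + 1) - x i) * r ≤ 2 := by
    rw [div_mul_eq_mul_div, div_le_iff₀ hw]; linarith
  have hK₀ := hK.nonneg
  rw [iteratedDeriv_transition, abs_mul, abs_pow, abs_of_pos (div_pos two_pos hw)]
  calc _ = |iteratedDeriv k smoothTransition _| * (2 / (x (i + 1) - x i) * r) ^ k := by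
        rw [mul_pow]; ring
    _ ≤ K * 2 ^ k := mul_le_mul (hK k hk _).2 (pow_le_pow_left₀ (by positivity) hq k)
        (by positivity) hK₀
    _ ≤ K * 2 ^ 2 := by gcongr; exact one_le_two
    _ = 4 * K := by ring

end Derivatives

section Estimates

lemma exists_mem_uIcc_slope_eq_deriv (hF : Differentiable ℝ F) {a b : ℝ} (hab : a ≠ b) :
    ∃ c ∈ uIcc a b, slope F a b = deriv F c := by
  wlog h : a < b generalizing a b
  · obtain ⟨c, hc, hc'⟩ := this hab.symm (lt_of_le_of_ne (not_lt.1 h) hab.symm)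
    exact ⟨c, uIcc_comm b a ▸ hc, slope_comm F a b ▸ hc'⟩
  obtain ⟨c, hc, hc'⟩ :=
    exists_deriv_eq_slope' F h hF.continuous.continuousOn hF.differentiableOn
  exact ⟨c, Icc_subset_uIcc (Ioo_subset_Icc_self hc), hc'.symm⟩

lemma abs_deriv_sub_deriv_le (hF : ContDiff ℝ 2 F) (hM : ∀ s, |deriv (deriv F) s| ≤ M)
    (a b : ℝ) : |deriv F a - deriv F b| ≤ M * |a - b| := by
  have hd : Differentiable ℝ (deriv F) := by
    simpa using hF.differentiable_iteratedDeriv 1 (by norm_num)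
  simpa [Real.norm_eq_abs] using Convex.norm_image_sub_le_of_norm_deriv_le
    (fun y _ => hd y) (fun y _ => (Real.norm_eq_abs _).trans_le (hM y)) convex_univ
    (mem_univ b) (mem_univ a)

lemma slope_nearestNbr_eq (hfF : ∀ j < n, F (x j) = f (x j)) (hj : j < n) :
    slope f (x j) (nearestNbr n x j) = slope F (x j) (nearestNbr n x j) := by
  obtain ⟨k, hk, hk'⟩ := exists_nearestNbr_eq (x := x) hj
  rw [slope_def_field, slope_def_field, hk', hfF j hj, hfF k hk]

lemma abs_slope_nearestNbr_le (hF : Differentiable ℝ F) (hM : ∀ s, |deriv F s| ≤ M)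
    (hfF : ∀ j < n, F (x j) = f (x j)) (hj : j < n) :
    |slope f (x j) (nearestNbr n x j)| ≤ M := by
  rw [slope_nearestNbr_eq hfF hj]
  by_cases h : x j = nearestNbr n x j
  · rw [← h, slope_same, abs_zero]; exact (abs_nonneg _).trans (hM 0)
  · obtain ⟨c, -, hc⟩ := exists_mem_uIcc_slope_eq_deriv hF h
    rw [hc]; exact hM c

lemma exists_slope_nearestNbr_eq_deriv (hx : StrictMono x) (hn : 2 ≤ n) (hj : j < n)
    (hF : Differentiable ℝ F) (hfF : ∀ j < n, F (x j) = f (x j)) :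
    ∃ c, |c - x j| ≤ |nearestNbr n x j - x j| ∧
      slope f (x j) (nearestNbr n x j) = deriv F c := by
  obtain ⟨c, hc, hc'⟩ := exists_mem_uIcc_slope_eq_deriv hF (nearestNbr_ne hx hn hj).symm
  exact ⟨c, abs_sub_left_of_mem_uIcc hc, (slope_nearestNbr_eq hfF hj).trans hc'⟩

/-- Within a window, the slopes at its two ends and across it are values of `F'` at points
at most `3 (x (i + 1) - x i)` apart. -/
lemma abs_slope_sub_slope_le (hx : StrictMono x) (hi : i + 1 < n) (hF : ContDiff ℝ 2 F)
    (hM : ∀ s, |deriv (deriv F) s| ≤ M) (hfF : ∀ j < n, F (x j) = f (x j)) :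
    |slope f (x (i + 1)) (nearestNbr n x (i + 1)) - slope f (x i) (nearestNbr n x i)|
        ≤ 3 * M * (x (i + 1) - x i) ∧
      |slope f (x i) (x (i + 1)) - slope f (x (i + 1)) (nearestNbr n x (i + 1))|
        ≤ 3 * M * (x (i + 1) - x i) := by
  have hM₀ : 0 ≤ M := (abs_nonneg _).trans (hM 0)
  have hlt : x i < x (i + 1) := hx i.lt_succ_self
  have hd : Differentiable ℝ F := hF.differentiable two_ne_zero
  obtain ⟨c₀, hc₀, h₀⟩ := exists_slope_nearestNbr_eq_deriv hx (by omega) (by omega : i < n) hd hfF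
  obtain ⟨c₁, hc₁, h₁⟩ := exists_slope_nearestNbr_eq_deriv hx (by omega) hi hd hfF
  obtain ⟨c, hc, h⟩ := exists_deriv_eq_slope' F hlt hd.continuous.continuousOn hd.differentiableOn
  have hq : slope f (x i) (x (i + 1)) = deriv F c := by
    rw [h, slope_def_field, slope_def_field, hfF i (by omega), hfF (i + 1) hi]
  have hn₀ := (abs_nearestNbr_sub_le_right hx hi).trans' hc₀
  have hn₁ : |c₁ - x (i + 1)| ≤ x (i + 1) - x i :=
    hc₁.trans (abs_nearestNbr_sub_le_left (j := i + 1) hx i.succ_pos hi)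
  rw [abs_le] at hn₀ hn₁
  obtain ⟨hc, hc'⟩ := hc
  have hlip : ∀ a b, |a - b| ≤ 3 * (x (i + 1) - x i) →
      |deriv F a - deriv F b| ≤ 3 * M * (x (i + 1) - x i) := fun a b hab =>
    (abs_deriv_sub_deriv_le hF hM a b).trans (by nlinarith)
  rw [h₀, h₁, hq]
  constructor <;> refine hlip _ _ (abs_le.2 ⟨?_, ?_⟩) <;> linarith

lemma abs_iteratedDeriv_jet_le_of_c2NormLE1 (hK : ProfileBound K) (hF : ContDiff ℝ 2 F)
    (hFM : C2NormLE1 F M) (hfF : ∀ j < n, F (x j) = f (x j)) (hj : j < n) (hk : k ≤ 2)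
    (t : ℝ) : |iteratedDeriv k (jet n x f j) t| ≤ (1 + K) * M := by
  have hs := abs_slope_nearestNbr_le (hF.differentiable two_ne_zero)
    (abs_deriv_le_of_c2NormLE1 hFM) hfF hj
  have hf := abs_le_of_c2NormLE1 hFM (x j)
  rw [hfF j hj] at hf
  nlinarith [abs_iteratedDeriv_jet_le (n := n) (x := x) (f := f) (j := j) hK hk t, hK.nonneg]

lemma jet_eventuallyEq_affine (h : |t - x j| < 1) :
    jet n x f j =ᶠ[𝓝 t] fun s => f (x j) + slope f (x j) (nearestNbr n x j) * (s - x j) := by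
  have hT : Tendsto (fun s => s - x j) (𝓝 t) (𝓝 (t - x j)) := tendsto_id.sub_const (x j)
  filter_upwards [hT.eventually (truncId_eventuallyEq_id h)] with s hs
  rw [jet, hs, id]

lemma iteratedDeriv_const_add_mul (hk : 0 < k) (a b t : ℝ) :
    iteratedDeriv k (fun s => a + b * s) t = if k = 1 then b else 0 := by
  rw [iteratedDeriv_const_add hk, iteratedDeriv_const_mul_field, iteratedDeriv_fun_id]
  simp [hk.ne']

/-- Both jets are affine on a window of width `< 1`. -/
lemma abs_iteratedDeriv_jet_sub_jet_le (hx : StrictMono x) (hi : i + 1 < n)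
    (hw : x (i + 1) - x i < 1) (ht₁ : x i ≤ t) (ht₂ : t ≤ x (i + 1)) (hF : ContDiff ℝ 2 F)
    (hM : ∀ s, |deriv (deriv F) s| ≤ M) (hfF : ∀ j < n, F (x j) = f (x j)) (hk : k ≤ 2) :
    |iteratedDeriv k (jet n x f (i + 1) - jet n x f i) t|
      ≤ 6 * M * (x (i + 1) - x i) ^ (2 - k) := by
  obtain ⟨h₁₀, hq₁⟩ := abs_slope_sub_slope_le hx hi hF hM hfF
  have hM₀ : 0 ≤ M := (abs_nonneg _).trans (hM 0)
  have hw₀ : 0 < x (i + 1) - x i := sub_pos.2 (hx i.lt_succ_self)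
  have hfq : f (x (i + 1)) - f (x i) = (x (i + 1) - x i) * slope f (x i) (x (i + 1)) := by
    rw [slope_def_field]; field_simp
  set w := x (i + 1) - x i with hw_def
  set s₀ := slope f (x i) (nearestNbr n x i)
  set s₁ := slope f (x (i + 1)) (nearestNbr n x (i + 1))
  set q := slope f (x i) (x (i + 1))
  have hΔ : jet n x f (i + 1) - jet n x f i =ᶠ[𝓝 t]
      fun s => (f (x (i + 1)) - f (x i) - s₁ * x (i + 1) + s₀ * x i) + (s₁ - s₀) * s := by
    filter_upwards [jet_eventuallyEq_affine (f := f) (n := n) (j := i + 1)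
        (abs_lt.2 ⟨by linarith, by linarith⟩),
      jet_eventuallyEq_affine (f := f) (n := n) (j := i) (abs_lt.2 ⟨by linarith, by linarith⟩)]
      with s h₁ h₀
    rw [Pi.sub_apply, h₁, h₀]; ring
  rw [hΔ.iteratedDeriv_eq]
  interval_cases k
  · calc |iteratedDeriv 0 _ t| = |w * (q - s₁) + (s₁ - s₀) * (t - x i)| := by
          rw [iteratedDeriv_zero, hfq, hw_def]; ring_nf
      _ ≤ |w * (q - s₁)| + |(s₁ - s₀) * (t - x i)| := abs_add_le _ _
      _ = w * |q - s₁| + |s₁ - s₀| * (t - x i) := by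
          rw [abs_mul, abs_mul, abs_of_pos hw₀, abs_of_nonneg (sub_nonneg.2 ht₁)]
      _ ≤ w * (3 * M * w) + 3 * M * w * w := add_le_add
          (mul_le_mul_of_nonneg_left hq₁ hw₀.le)
          (mul_le_mul h₁₀ (by linarith) (sub_nonneg.2 ht₁) (by positivity))
      _ = 6 * M * w ^ (2 - 0) := by ring
  · rw [iteratedDeriv_const_add_mul one_pos, if_pos rfl]
    norm_num
    linarith [mul_nonneg hM₀ hw₀.le]
  · rw [iteratedDeriv_const_add_mul two_pos, if_neg (by norm_num), abs_zero]
    positivity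

lemma abs_iteratedDeriv_window_le (hK : ProfileBound K) (hx : StrictMono x) (hi : i + 1 < n)
    (ht₁ : x i ≤ t) (ht₂ : t ≤ x (i + 1)) (hF : ContDiff ℝ 2 F) (hFM : C2NormLE1 F M)
    (hfF : ∀ j < n, F (x j) = f (x j)) {m : ℕ} (hm : m ≤ 2) :
    |iteratedDeriv m (window n x f i) t| ≤ 97 * (1 + K) ^ 2 * M := by
  have hK₀ := hK.nonneg
  have hM₀ : 0 ≤ M := (abs_nonneg _).trans (abs_le_of_c2NormLE1 hFM 0)
  have hlt : x i < x (i + 1) := hx i.lt_succ_self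
  have hjet : ∀ j < n, ∀ k ≤ 2, |iteratedDeriv k (jet n x f j) t| ≤ (1 + K) * M :=
    fun j hj k hk => abs_iteratedDeriv_jet_le_of_c2NormLE1 hK hF hFM hfF hj hk t
  obtain ⟨r, hr₀, hr₁, hrw, hΔ⟩ : ∃ r, 0 < r ∧ r ≤ 1 ∧ r ≤ x (i + 1) - x i ∧ ∀ k ≤ 2,
      |iteratedDeriv k (jet n x f (i + 1) - jet n x f i) t| ≤ 6 * (1 + K) * M * r ^ (2 - k) := by
    rcases lt_or_ge (x (i + 1) - x i) 1 with hw | hw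
    · refine ⟨_, sub_pos.2 hlt, hw.le, le_rfl, fun k hk => ?_⟩
      have := abs_iteratedDeriv_jet_sub_jet_le hx hi hw ht₁ ht₂ hF
        (abs_deriv_deriv_le_of_c2NormLE1 hFM) hfF hk
      have := pow_nonneg (sub_pos.2 hlt).le (2 - k)
      nlinarith [mul_nonneg (mul_nonneg hK₀ hM₀) this]
    · refine ⟨1, one_pos, le_rfl, hw, fun k hk => ?_⟩
      rw [one_pow, mul_one, iteratedDeriv_sub
        (contDiff_jet.contDiffAt.of_le (by exact_mod_cast hk))
        (contDiff_jet.contDiffAt.of_le (by exact_mod_cast hk))]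
      linarith [abs_sub _ _ |>.trans (add_le_add (hjet (i + 1) hi k hk) (hjet i (by omega) k hk)),
        mul_nonneg (by linarith : (0 : ℝ) ≤ 1 + K) hM₀]
  have hΔc : ContDiff ℝ 2 (jet n x f (i + 1) - jet n x f i) := contDiff_jet.sub contDiff_jet
  have hΔθ : ContDiff ℝ 2 ((jet n x f (i + 1) - jet n x f i) * transition x i) :=
    hΔc.mul contDiff_transition
  have hprod := abs_iteratedDeriv_mul_le_of_scale hΔc contDiff_transition hr₀ hr₁ hΔ
    (fun k hk => abs_iteratedDeriv_transition_mul_pow_le hK hlt hr₀.le hrw hk t) hm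
  rw [window, iteratedDeriv_add (contDiff_jet.contDiffAt.of_le (by exact_mod_cast hm))
    (hΔθ.contDiffAt.of_le (by exact_mod_cast hm))]
  calc _ ≤ (1 + K) * M + 4 * (6 * (1 + K) * M * (4 * K)) :=
        (abs_add_le _ _).trans (add_le_add (hjet i (by omega) m hm) hprod)
    _ ≤ 97 * (1 + K) ^ 2 * M := by
        nlinarith [mul_nonneg hK₀ hM₀, mul_nonneg (mul_nonneg hK₀ hK₀) hM₀]

lemma c2NormLE1_extend (hK : ProfileBound K) (hx : StrictMono x) (hn : 0 < n)
    (hF : ContDiff ℝ 2 F) (hFM : C2NormLE1 F M) (hfF : ∀ j < n, F (x j) = f (x j)) :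
    C2NormLE1 (extend n x f) (194 * (1 + K) ^ 2 * M) := by
  have hM₀ : 0 ≤ M := (abs_nonneg _).trans (abs_le_of_c2NormLE1 hFM 0)
  rw [show 194 * (1 + K) ^ 2 * M = 2 * (97 * (1 + K) ^ 2 * M) by ring]
  refine c2NormLE1_two_mul_of_abs_le fun m hm t => ?_
  rcases extend_eventuallyEq_jet_or_window hx hn t with ⟨k, hk, h⟩ | ⟨i, hi, ht₁, ht₂, h⟩
  · rw [(h f).iteratedDeriv_eq]
    refine (abs_iteratedDeriv_jet_le_of_c2NormLE1 hK hF hFM hfF hk hm t).trans ?_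
    nlinarith [hK.nonneg, mul_nonneg hK.nonneg hM₀, mul_nonneg (mul_nonneg hK.nonneg hK.nonneg) hM₀]
  · rw [(h f).iteratedDeriv_eq]
    exact abs_iteratedDeriv_window_le hK hx hi ht₁ ht₂.le hF hFM hfF hm

end Estimates

section TraceNorm

lemma exists_c2NormLE1_extension {E : Set ℝ} {G : ℝ → ℝ} (hE : Bornology.IsBounded E)
    (hG : ContDiff ℝ 2 G) (hGf : ∀ t ∈ E, G t = f t) :
    ∃ F M, ContDiff ℝ 2 F ∧ (∀ t ∈ E, F t = f t) ∧ C2NormLE1 F M := by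
  obtain ⟨R, hR⟩ := hE.subset_closedBall 0
  let φ : ContDiffBump (0 : ℝ) := ⟨max R 1, max R 1 + 1, lt_max_of_lt_right one_pos, by linarith⟩
  have hF : ContDiff ℝ 2 (G * ⇑φ) := hG.mul φ.contDiff
  obtain ⟨B, hB⟩ :=
    exists_abs_iteratedDeriv_le_of_hasCompactSupport hF φ.hasCompactSupport.mul_left
  refine ⟨G * ⇑φ, 2 * B, hF, fun t ht => ?_, c2NormLE1_two_mul_of_abs_le hB⟩
  rw [Pi.mul_apply, φ.one_of_mem_closedBall
    (Metric.closedBall_subset_closedBall (le_max_left R 1) (hR ht)), mul_one, hGf t ht]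

lemma c2NormLE1_mul_traceNorm1 {E : Set ℝ} {L : ℝ → ℝ} {C : ℝ} (hC : 0 < C)
    (hne : ∃ F M, ContDiff ℝ 2 F ∧ (∀ t ∈ E, F t = f t) ∧ C2NormLE1 F M)
    (hL : ∀ F M, ContDiff ℝ 2 F → (∀ t ∈ E, F t = f t) → C2NormLE1 F M → C2NormLE1 L (C * M)) :
    C2NormLE1 L (C * traceNorm1 E f) := by
  intro t
  obtain ⟨F, M, hF⟩ := hne
  rw [traceNorm1, ← div_le_iff₀' hC]
  exact le_csInf ⟨M, F, hF⟩ fun M ⟨F, hF, hFE, hFM⟩ => (div_le_iff₀' hC).2 (hL F M hF hFE hFM t)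

end TraceNorm

lemma exists_strictMono_enum {E : Set ℝ} (hE : E.Finite) (hne : E.Nonempty) :
    ∃ n, 0 < n ∧ ∃ x : ℕ → ℝ, StrictMono x ∧ ∀ t, t ∈ E ↔ ∃ j < n, x j = t := by
  set s := hE.toFinset
  set N := s.card
  have hN : 0 < N := Finset.card_pos.2 (hE.toFinset_nonempty.2 hne)
  set e := s.orderEmbOfFin rfl
  have hfin : ∀ j (hj : j < N), (⟨min j (N - 1), by omega⟩ : Fin N) = ⟨j, hj⟩ :=
    fun j hj => Fin.ext (min_eq_left (by omega))
  -- past the last node the sequence continues in unit steps, to be strictly monotone on `ℕ`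
  refine ⟨N, hN, fun j => e ⟨min j (N - 1), by omega⟩ + ((j - (N - 1) : ℕ) : ℝ),
    strictMono_nat_of_lt_succ fun j => ?_, fun t => ?_⟩
  · rcases lt_or_ge j (N - 1) with hj | hj
    · rw [hfin j (by omega), hfin (j + 1) (by omega), Nat.sub_eq_zero_of_le hj.le,
        Nat.sub_eq_zero_of_le hj]
      simp only [Nat.cast_zero, add_zero]
      exact e.strictMono (Fin.mk_lt_mk.2 j.lt_succ_self)
    · have h₁ : (⟨min j (N - 1), by omega⟩ : Fin N) = ⟨min (j + 1) (N - 1), by omega⟩ :=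
        Fin.ext (show min j (N - 1) = min (j + 1) (N - 1) by omega)
      rw [h₁, show j + 1 - (N - 1) = j - (N - 1) + 1 by omega]
      push_cast
      linarith
  · rw [← hE.mem_toFinset]
    constructor
    · intro ht
      obtain ⟨⟨j, hj⟩, rfl⟩ : t ∈ Set.range e := by rwa [Finset.range_orderEmbOfFin]
      exact ⟨j, hj, by dsimp only; rw [hfin j hj, Nat.sub_eq_zero_of_le (by omega)]; simp⟩
    · rintro ⟨j, hj, rfl⟩
      dsimp only
      rw [hfin j hj, Nat.sub_eq_zero_of_le (by omega), Nat.cast_zero, add_zero]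
      exact s.orderEmbOfFin_mem rfl _

end C2Extension

open C2Extension

/-- One-dimensional linear `C²` extension operator of bounded depth.
(The operator on `C²(E) ≅ ℝ^E` is modelled as a linear operator on all of `ℝ → ℝ` which
only uses the values of its argument on `E`.) -/
theorem oneDim_linear_extension_bounded_depth :
    ∃ (C : ℝ) (D : ℕ),
      ∀ E : Set ℝ, E.Finite →
        ∃ L : (ℝ → ℝ) →ₗ[ℝ] (ℝ → ℝ),
          (∀ f : ℝ → ℝ,
            ContDiff ℝ 2 (L f) ∧ (∀ t ∈ E, L f t = f t) ∧
            C2NormLE1 (L f) (C * traceNorm1 E f)) ∧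
          (∀ t : ℝ, ∃ S : Set ℝ, S ⊆ E ∧ S.ncard ≤ D ∧
            ∀ f g : ℝ → ℝ, (∀ s ∈ S, f s = g s) →
              ∀ m ≤ 2, iteratedDeriv m (L f) t = iteratedDeriv m (L g) t) := by
  obtain ⟨K, hK⟩ := exists_profileBound
  have hC : 0 < 194 * (1 + K) ^ 2 := by have := hK.nonneg; positivity
  refine ⟨194 * (1 + K) ^ 2, 4, fun E hE => ?_⟩
  rcases E.eq_empty_or_nonempty with rfl | hne
  · have hzero : ∀ M, 0 ≤ M → C2NormLE1 (0 : ℝ → ℝ) M := fun M hM t => by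
      simpa [C2sum1] using hM
    refine ⟨0, fun f => ⟨contDiff_const, by simp, c2NormLE1_mul_traceNorm1 hC
      ⟨0, 0, contDiff_const, by simp, hzero 0 le_rfl⟩ fun F M _ _ hFM => hzero _ ?_⟩,
      fun t => ⟨∅, empty_subset _, by simp, fun f g _ m _ => rfl⟩⟩
    exact mul_nonneg hC.le ((abs_nonneg _).trans (abs_le_of_c2NormLE1 hFM 0))
  obtain ⟨n, hn, x, hx, hxE⟩ := exists_strictMono_enum hE hne
  have hnode : ∀ f, ∀ t ∈ E, extend n x f t = f t := fun f t ht => by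
    obtain ⟨j, hj, rfl⟩ := (hxE t).1 ht
    exact extend_apply_node hx hj f
  refine ⟨extendLinearMap n x, fun f => ⟨contDiff_extend, hnode f, ?_⟩, fun t => ?_⟩
  · exact c2NormLE1_mul_traceNorm1 hC
      (exists_c2NormLE1_extension hE.isBounded contDiff_extend (hnode f))
      fun F M hF hFE hFM =>
        c2NormLE1_extend hK hx hn hF hFM fun j hj => hFE _ ((hxE _).2 ⟨j, hj, rfl⟩)
  · obtain ⟨S, hS, hSE, hSeq⟩ := exists_finset_extend_eventuallyEq hx hn t
    exact ⟨S, fun s hs => (hxE s).2 (hSE s hs), by rwa [Set.ncard_coe_finset],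
      fun f g hfg m _ => (hSeq f g hfg).iteratedDeriv_eq m⟩

end
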